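/- arXiv:2505.05688 — 2 statements merged into one kernel-verified Lean document; each statement's English description precedes it below -/
import Mathlib

section
/- Let s ≥ 2 be an integer and let (d_v)_{v∈V} be a finite family of integers with each d_v ≥ 2, indexed by a nonempty finite set V. Then Σ_{v∈V} vol(B_{s·d_v}) < Σ_{v∈V} vol(B_{d_v}) + 2π·|V|·log s. -/
open Real

noncomputable def Lob (θ : ℝ) : ℝ := -∫ t in (0:ℝ)..θ, Real.log |2 * Real.sin t|

noncomputable def volB (n : ℝ) : ℝ := 2 * n * Lob (π / n)

noncomputable def vtet : ℝ := 3 * Lob (π / 3)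

noncomputable def voct : ℝ := 8 * Lob (π / 4)

/-!
Substituting `t = s τ` in the Lobachevsky integral gives
`volB (s n) - volB n = 2 s n ∫₀^{π/(s n)} (log |2 sin (s τ)| - log |2 sin τ|) dτ`.
Strict concavity of `sin` on `[0, π]` gives `sin (s τ) < s sin τ`, so the integrand is less than
`log s` on the whole interval, and `2 s n · π/(s n) · log s = 2π log s`.
-/

open MeasureTheory intervalIntegral

lemma intervalIntegrable_log_abs_two_mul_sin_mul (c a b : ℝ) :
    IntervalIntegrable (fun t => log |2 * sin (c * t)|) volume a b := by
  have h : AnalyticOnNhd ℝ (fun t => 2 * sin (c * t)) (Set.uIcc a b) := fun _ _ => by fun_prop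
  exact h.meromorphicOn.intervalIntegrable_log_norm

lemma sin_mul_lt_mul_sin {s x : ℝ} (hs : 1 < s) (hx : 0 < x) (hsx : s * x ≤ π) :
    sin (s * x) < s * sin x := by
  have hs0 : 0 < s := zero_lt_one.trans hs
  have h := strictConcaveOn_sin_Icc.2 ⟨(mul_pos hs0 hx).le, hsx⟩ ⟨le_rfl, pi_pos.le⟩
    (mul_pos hs0 hx).ne' (inv_pos.2 hs0) (sub_pos.2 (inv_lt_one_of_one_lt₀ hs))
    (add_sub_cancel _ _)
  simp only [smul_eq_mul, mul_zero, sin_zero, add_zero, inv_mul_cancel_left₀ hs0.ne'] at h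
  rwa [inv_mul_lt_iff₀ hs0] at h

lemma log_abs_two_mul_sin_mul_lt {s x : ℝ} (hs : 1 < s) (hx : 0 < x) (hsx : s * x < π) :
    log |2 * sin (s * x)| < log |2 * sin x| + log s := by
  have hs0 : 0 < s := zero_lt_one.trans hs
  have hxπ : x < π := lt_of_le_of_lt (le_mul_of_one_le_left hx.le hs.le) hsx
  have hsin : 0 < sin x := sin_pos_of_pos_of_lt_pi hx hxπ
  have hsin_mul : 0 < sin (s * x) := sin_pos_of_pos_of_lt_pi (mul_pos hs0 hx) hsx
  rw [← log_mul (by positivity) hs0.ne', abs_of_pos (by positivity),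
    abs_of_pos (by positivity)]
  exact log_lt_log (by positivity) (by nlinarith [sin_mul_lt_mul_sin hs hx hsx.le])

lemma mul_Lob_sub_lt_Lob_mul {s θ : ℝ} (hs : 1 < s) (hθ : 0 < θ) (hsθ : s * θ ≤ π) :
    s * Lob θ - s * θ * log s < Lob (s * θ) := by
  set f : ℝ → ℝ := fun t => log |2 * sin t|
  have hf : IntervalIntegrable f volume 0 θ := by
    simpa only [one_mul] using intervalIntegrable_log_abs_two_mul_sin_mul 1 0 θ
  have hf_mul : IntervalIntegrable (fun τ => f (s * τ)) volume 0 θ :=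
    intervalIntegrable_log_abs_two_mul_sin_mul s 0 θ
  have hscale : ∫ t in (0:ℝ)..s * θ, f t = s * ∫ τ in (0:ℝ)..θ, f (s * τ) := by
    have h := smul_integral_comp_mul_left f s (a := 0) (b := θ)
    rw [smul_eq_mul, mul_zero] at h
    exact h.symm
  have hgap : 0 < ∫ τ in (0:ℝ)..θ, (f τ + log s - f (s * τ)) := by
    refine intervalIntegral_pos_of_pos_on ((hf.add intervalIntegrable_const).sub hf_mul)
      (fun τ hτ => sub_pos.2 (log_abs_two_mul_sin_mul_lt hs hτ.1 ?_)) hθ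
    exact (mul_lt_mul_of_pos_left hτ.2 (zero_lt_one.trans hs)).trans_le hsθ
  rw [integral_sub (hf.add intervalIntegrable_const) hf_mul,
    integral_add hf intervalIntegrable_const, intervalIntegral.integral_const, sub_zero,
    smul_eq_mul] at hgap
  have hgap_scaled := mul_lt_mul_of_pos_left hgap (zero_lt_one.trans hs)
  simp only [Lob]
  rw [hscale]
  linarith

lemma volB_mul_lt {s n : ℝ} (hs : 1 < s) (hn : 1 ≤ n) :
    volB (s * n) < volB n + 2 * π * log s := by
  have hn0 : 0 < n := zero_lt_one.trans_le hn
  set θ := π / (s * n) with hθ_def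
  have hθ : 0 < θ := div_pos pi_pos (mul_pos (zero_lt_one.trans hs) hn0)
  have hsθ : s * θ = π / n := by rw [hθ_def]; field_simp
  have h := mul_Lob_sub_lt_Lob_mul hs hθ (hsθ ▸ div_le_self pi_pos.le hn)
  rw [hsθ] at h
  calc volB (s * n) = 2 * n * (s * Lob θ - π / n * log s) + 2 * π * log s := by
        simp only [volB, ← hθ_def]; field_simp; ring
    _ < 2 * n * Lob (π / n) + 2 * π * log s := by gcongr

theorem stmt7 {ι : Type*} (V : Finset ι) (hV : V.Nonempty) (s : ℕ) (hs : 2 ≤ s)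
    (d : ι → ℕ) (hd : ∀ v ∈ V, 2 ≤ d v) :
    ∑ v ∈ V, volB (s * d v) < ∑ v ∈ V, volB (d v) + 2 * π * V.card * Real.log s := by
  have hs' : (1 : ℝ) < s := by exact_mod_cast hs
  calc ∑ v ∈ V, volB (s * d v)
      < ∑ v ∈ V, (volB (d v) + 2 * π * log s) :=
        Finset.sum_lt_sum_of_nonempty hV fun v hv =>
          volB_mul_lt hs' (by exact_mod_cast (one_le_two.trans (hd v hv)))
    _ = ∑ v ∈ V, volB (d v) + 2 * π * V.card * log s := by
        rw [Finset.sum_add_distrib, Finset.sum_const, nsmul_eq_mul]; ring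
end

section
/- The function n ↦ L(π/n) is strictly decreasing for real n ≥ 6; consequently for integers 6 ≤ n < m, vol(B_n)/n > vol(B_m)/m. -/
open Real

/-! `log |2 sin t|` has only logarithmic singularities, so `2 sin` being analytic (hence
meromorphic) makes the integrand of `Lob` integrable on every interval; the difference
`Lob b - Lob a = -∫ t in a..b, log (2 sin t)` is then positive for `0 ≤ a < b ≤ π/6`
because `0 < 2 sin t < 1` there. Composing with `x ↦ π / x`, which maps `[6, ∞)`
decreasingly into `(0, π/6]`, gives the first claim, and `vol(B_n)/n = 2 L(π/n)` the second. -/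

theorem intervalIntegrable_log_abs_two_mul_sin (a b : ℝ) :
    IntervalIntegrable (fun t => log |2 * sin t|) MeasureTheory.volume a b := by
  simp only [log_abs]
  exact (analyticOnNhd_const.mul analyticOnNhd_sin).meromorphicOn.intervalIntegrable_log

theorem log_abs_two_mul_sin_neg {t : ℝ} (h0 : 0 < t) (h : t < π / 6) : log |2 * sin t| < 0 := by
  have hsin_pos : 0 < sin t := sin_pos_of_pos_of_lt_pi h0 (by linarith [pi_pos])
  have hsin_lt : sin t < 1 / 2 := by
    rw [← sin_pi_div_six]
    exact sin_lt_sin_of_lt_of_le_pi_div_two (by linarith) (by linarith [pi_pos]) h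
  rw [abs_of_pos (by positivity)]
  exact log_neg (by positivity) (by linarith)

theorem Lob_sub_Lob (a b : ℝ) : Lob b - Lob a = -∫ t in a..b, log |2 * sin t| := by
  rw [Lob, Lob, ← intervalIntegral.integral_interval_sub_left
    (intervalIntegrable_log_abs_two_mul_sin 0 b) (intervalIntegrable_log_abs_two_mul_sin 0 a)]
  ring

theorem strictMonoOn_Lob : StrictMonoOn Lob (Set.Icc 0 (π / 6)) := by
  intro a ha b hb hab
  have hpos : 0 < ∫ t in a..b, -log |2 * sin t| :=
    intervalIntegral.intervalIntegral_pos_of_pos_on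
      (intervalIntegrable_log_abs_two_mul_sin a b).neg
      (fun t ht => neg_pos.mpr
        (log_abs_two_mul_sin_neg (ha.1.trans_lt ht.1) (ht.2.trans_le hb.2)))
      hab
  rw [intervalIntegral.integral_neg] at hpos
  linarith [Lob_sub_Lob a b]

theorem strictAntiOn_Lob_pi_div : StrictAntiOn (fun x : ℝ => Lob (π / x)) (Set.Ici 6) := by
  have hdiv : StrictAntiOn (fun x : ℝ => π / x) (Set.Ici 6) := fun x hx y _ hxy =>
    div_lt_div_of_pos_left pi_pos (by linarith [Set.mem_Ici.mp hx]) hxy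
  refine strictMonoOn_Lob.comp_strictAntiOn hdiv fun x (hx : 6 ≤ x) => ⟨?_, ?_⟩
  · exact div_nonneg pi_pos.le (by linarith)
  · exact div_le_div_of_nonneg_left pi_pos.le (by norm_num) hx

theorem volB_div_self {x : ℝ} (hx : x ≠ 0) : volB x / x = 2 * Lob (π / x) := by
  rw [volB]
  field_simp

theorem stmt17 :
    StrictAntiOn (fun x : ℝ => Lob (π / x)) (Set.Ici 6) ∧
    ∀ n m : ℕ, 6 ≤ n → n < m → volB n / n > volB m / m := by
  refine ⟨strictAntiOn_Lob_pi_div, fun n m hn hnm => ?_⟩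
  have hn' : (6 : ℝ) ≤ n := by exact_mod_cast hn
  have hnm' : (n : ℝ) < m := by exact_mod_cast hnm
  rw [volB_div_self (by positivity), volB_div_self (by linarith)]
  linarith [strictAntiOn_Lob_pi_div hn' (hn'.trans hnm'.le) hnm']
end
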